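/- arXiv:1912.11617 — 2 statements merged into one kernel-verified Lean document; each statement's English description precedes it below -/
import Mathlib

section
/- Let f ∈ F₂[X] be an irreducible polynomial with f(0) ≠ 0, and let e be the exponent of f. If s is a nonzero binary sequence with f(E)s = 0, then s is periodic and its least period equals e. -/
open Polynomial

noncomputable def polyApp (f : Polynomial (ZMod 2)) (s : ℕ → ZMod 2) : ℕ → ZMod 2 :=
  fun i => f.sum fun j c => c * s (i + j)

def HasPeriodDvd (s : ℕ → ZMod 2) (N : ℕ) : Prop := ∀ i, s (i + N) = s i

def IsLeastPeriod (s : ℕ → ZMod 2) (e : ℕ) : Prop :=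
  0 < e ∧ HasPeriodDvd s e ∧ ∀ m, 0 < m → HasPeriodDvd s m → e ≤ m

def IsExponent (f : Polynomial (ZMod 2)) (e : ℕ) : Prop :=
  0 < e ∧ f ∣ X ^ e - 1 ∧ ∀ m, 0 < m → f ∣ X ^ m - 1 → e ≤ m

def shiftE : (ℕ → ZMod 2) →ₗ[ZMod 2] (ℕ → ZMod 2) where
  toFun s := fun i => s (i + 1)
  map_add' := by intros; rfl
  map_smul' := by intros; rfl

lemma shiftE_pow (j : ℕ) (s : ℕ → ZMod 2) (i : ℕ) : (shiftE ^ j) s i = s (i + j) := by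
  induction j generalizing i with
  | zero => rfl
  | succ j ih =>
    rw [pow_succ', Module.End.mul_apply]
    show (shiftE ^ j) s (i + 1) = s (i + (j + 1))
    rw [ih, show i + 1 + j = i + (j + 1) by omega]

lemma polyApp_eq (f : Polynomial (ZMod 2)) (s : ℕ → ZMod 2) :
    polyApp f s = (aeval shiftE f) s := by
  funext i
  rw [aeval_def, eval₂_eq_sum]
  unfold polyApp
  rw [Polynomial.sum, Polynomial.sum, LinearMap.sum_apply, Finset.sum_apply]
  refine Finset.sum_congr rfl fun j _ => ?_
  rw [Module.End.mul_apply, Module.algebraMap_end_apply, Pi.smul_apply, shiftE_pow,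
    smul_eq_mul]

lemma polyApp_dvd_zero (f g : Polynomial (ZMod 2)) (s : ℕ → ZMod 2)
    (hfs : polyApp f s = 0) (h : f ∣ g) : polyApp g s = 0 := by
  obtain ⟨q, rfl⟩ := h
  rw [mul_comm, polyApp_eq, map_mul, Module.End.mul_apply,
    show ((aeval shiftE) f) s = polyApp f s from (polyApp_eq f s).symm, hfs, map_zero]

lemma polyApp_add (a b : Polynomial (ZMod 2)) (s : ℕ → ZMod 2) :
    polyApp (a + b) s = polyApp a s + polyApp b s := by
  simp only [polyApp_eq, map_add, LinearMap.add_apply]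

lemma polyApp_Xpow_sub_one (m : ℕ) (s : ℕ → ZMod 2) (i : ℕ) :
    polyApp (X ^ m - 1) s i = s (i + m) - s i := by
  rw [polyApp_eq, map_sub, map_one, LinearMap.sub_apply, Pi.sub_apply, aeval_X_pow,
    shiftE_pow, Module.End.one_apply]

theorem least_period_eq_exponent (f : Polynomial (ZMod 2)) (hf : Irreducible f)
    (hf0 : f.coeff 0 ≠ 0) (e : ℕ) (he : IsExponent f e)
    (s : ℕ → ZMod 2) (hs : s ≠ 0) (hfs : polyApp f s = 0) :
    IsLeastPeriod s e := by
  obtain ⟨he0, hdvd, hmin⟩ := he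
  refine ⟨he0, ?_, ?_⟩
  · intro i
    have h := congrFun (polyApp_dvd_zero f _ s hfs hdvd) i
    rw [polyApp_Xpow_sub_one] at h
    exact sub_eq_zero.mp h
  · intro m hm hper
    have h1 : polyApp (X ^ m - 1 : Polynomial (ZMod 2)) s = 0 := by
      funext i
      rw [polyApp_Xpow_sub_one, hper i, sub_self]
      rfl
    refine hmin m hm ?_
    by_contra hnd
    obtain ⟨u, v, huv⟩ := hf.coprime_iff_not_dvd.mpr hnd
    apply hs
    have h2 : polyApp 1 s = 0 := by
      rw [← huv, polyApp_add,
        polyApp_dvd_zero f _ s hfs (dvd_mul_left f u),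
        polyApp_dvd_zero _ _ s h1 (dvd_mul_left _ v), add_zero]
    rw [polyApp_eq, map_one, Module.End.one_apply] at h2
    exact h2
end

section
/- Let s be a nonzero binary sequence that has period dividing some N > 0, and suppose its minimal zero polynomial is g = q₁^{δ₁} · q₂^{δ₂} ⋯ q_t^{δ_t}, where q₁, …, q_t are pairwise distinct irreducible polynomials over F₂ and δ_i ≥ 1 for 1 ≤ i ≤ t. Then for any integers d₁, …, d_{t−1} with d_i ≥ δ_i for 1 ≤ i ≤ t−1, the sequence r := q₁(E)^{d₁} q₂(E)^{d₂} ⋯ q_{t−1}(E)^{d_{t−1}} q_t(E)^{δ_t − 1} s is nonzero and is generated by q_t, i.e., r ≠ 0 and q_t(E)r = 0. -/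
/-!
Polynomials act on sequences through the shift `E = funLeft Nat.succ`, so the polynomials
generating `s` form an ideal of `F₂[X]` and the minimal zero polynomial `g` divides each of them.
With `F = ∏_{i<t} q_i ^ d_i`, the product `q_t · F · q_t ^ (δ_t - 1) = F · q_t ^ δ_t` is a multiple
of `g`, so `q_t(E) r = 0`. If `r` were `0`, then `q_t ^ δ_t ∣ g ∣ F · q_t ^ (δ_t - 1)`, hence
`q_t ∣ F`; but `q_t` is prime and differs from the other `q_i`, which over `F₂` are monic.
-/

open Polynomial

def IsMinZeroPoly (g : Polynomial (ZMod 2)) (s : ℕ → ZMod 2) : Prop :=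
  g ≠ 0 ∧ polyApp g s = 0 ∧
    ∀ h : Polynomial (ZMod 2), h ≠ 0 → polyApp h s = 0 → g.natDegree ≤ h.natDegree

lemma funLeft_succ_pow_apply {R M : Type*} [Semiring R] [AddCommMonoid M] [Module R M]
    (n : ℕ) (s : ℕ → M) (i : ℕ) :
    (LinearMap.funLeft R M Nat.succ ^ n) s i = s (i + n) := by
  induction n generalizing s with
  | zero => rfl
  | succ n ih => rw [pow_succ, Module.End.mul_apply, ih]; rfl

lemma polyApp_eq_aeval (f : (ZMod 2)[X]) (s : ℕ → ZMod 2) :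
    polyApp f s = aeval (LinearMap.funLeft (ZMod 2) (ZMod 2) Nat.succ) f s := by
  funext i
  simp only [polyApp, Polynomial.sum, aeval_def, eval₂_eq_sum, LinearMap.coe_sum,
    Finset.sum_apply, Module.End.mul_apply, Module.algebraMap_end_apply, Pi.smul_apply,
    funLeft_succ_pow_apply, smul_eq_mul]

lemma polyApp_add_s7 (f g : (ZMod 2)[X]) (s : ℕ → ZMod 2) :
    polyApp (f + g) s = polyApp f s + polyApp g s := by
  simp only [polyApp_eq_aeval, map_add, LinearMap.add_apply]

lemma polyApp_mul (f g : (ZMod 2)[X]) (s : ℕ → ZMod 2) :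
    polyApp (f * g) s = polyApp f (polyApp g s) := by
  simp only [polyApp_eq_aeval, map_mul, Module.End.mul_apply]

lemma polyApp_zero_right (f : (ZMod 2)[X]) : polyApp f 0 = 0 := by
  simp only [polyApp_eq_aeval, map_zero]

def zeroPolyIdeal (s : ℕ → ZMod 2) : Ideal (ZMod 2)[X] where
  carrier := {f | polyApp f s = 0}
  add_mem' {f g} hf hg := by simp_all [polyApp_add_s7]
  zero_mem' := by simp [polyApp_eq_aeval]
  smul_mem' c f hf := by simp_all [polyApp_mul, polyApp_zero_right]

lemma Polynomial.dvd_of_mem_of_natDegree_le {K : Type*} [Field K] {I : Ideal K[X]} {g h : K[X]}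
    (hg0 : g ≠ 0) (hg : g ∈ I) (hmin : ∀ f ∈ I, f ≠ 0 → g.natDegree ≤ f.natDegree)
    (hh : h ∈ I) : g ∣ h := by
  rw [← EuclideanDomain.mod_eq_zero]
  by_contra hmod
  have hmem : h % g ∈ I := by
    rw [EuclideanDomain.mod_eq_sub_mul_div]
    exact I.sub_mem hh (I.mul_mem_right _ hg)
  exact (natDegree_lt_natDegree hmod (degree_mod_lt h hg0)).not_ge (hmin _ hmem hmod)

lemma IsMinZeroPoly.dvd {g h : (ZMod 2)[X]} {s : ℕ → ZMod 2} (hmin : IsMinZeroPoly g s)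
    (hh : polyApp h s = 0) : g ∣ h :=
  dvd_of_mem_of_natDegree_le (I := zeroPolyIdeal s) hmin.1 hmin.2.1
    (fun f hf hf0 => hmin.2.2 f hf0 hf) hh

lemma Polynomial.monic_of_ne_zero_zmod_two {p : (ZMod 2)[X]} (hp : p ≠ 0) : p.Monic := by
  have key : ∀ a : ZMod 2, a ≠ 0 → a = 1 := by decide
  exact key _ (leadingCoeff_ne_zero.mpr hp)

lemma Polynomial.eq_of_irreducible_of_dvd_zmod_two {p q : (ZMod 2)[X]} (hp : Irreducible p)
    (hq : Irreducible q) (hpq : p ∣ q) : p = q :=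
  eq_of_monic_of_associated (monic_of_ne_zero_zmod_two hp.ne_zero)
    (monic_of_ne_zero_zmod_two hq.ne_zero) (hp.associated_of_dvd hq hpq)

lemma Prime.not_dvd_prod_pow {M ι : Type*} [CommMonoidWithZero M] {q : ι → M} {p : M}
    (hp : Prime p) (e : ι → ℕ) (S : Finset ι) (hq : ∀ i ∈ S, ¬ p ∣ q i) :
    ¬ p ∣ ∏ i ∈ S, q i ^ e i := by
  rw [hp.dvd_finsetProd_iff]
  rintro ⟨i, hi, hdvd⟩
  exact hq i hi (hp.dvd_of_dvd_pow hdvd)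

lemma pow_dvd_mul_pow_pred_iff {M : Type*} [CommMonoidWithZero M] [IsCancelMulZero M]
    {p a : M} (hp : p ≠ 0) {n : ℕ} (hn : n ≠ 0) : p ^ n ∣ a * p ^ (n - 1) ↔ p ∣ a := by
  obtain ⟨m, rfl⟩ := Nat.exists_eq_succ_of_ne_zero hn
  rw [Nat.succ_sub_one, pow_succ, mul_comm a]
  exact mul_dvd_mul_iff_left (pow_ne_zero _ hp)

theorem raise_exponents_of_min_zero_poly_general
    (s : ℕ → ZMod 2)
    (t : ℕ) (q : Fin (t + 1) → Polynomial (ZMod 2)) (δ : Fin (t + 1) → ℕ)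
    (hirr : ∀ i, Irreducible (q i))
    (hdist : ∀ i j, i ≠ j → q i ≠ q j)
    (hδ : ∀ i, 1 ≤ δ i)
    (hmin : IsMinZeroPoly (∏ i, q i ^ δ i) s)
    (d : Fin (t + 1) → ℕ) (hd : ∀ i, i ≠ Fin.last t → δ i ≤ d i)
    (r : ℕ → ZMod 2)
    (hr : r = polyApp ((∏ i ∈ Finset.univ.erase (Fin.last t), q i ^ d i) *
                        q (Fin.last t) ^ (δ (Fin.last t) - 1)) s) :
    r ≠ 0 ∧ polyApp (q (Fin.last t)) r = 0 := by
  set L := Fin.last t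
  set F := ∏ i ∈ Finset.univ.erase L, q i ^ d i
  rw [← Finset.prod_erase_mul _ _ (Finset.mem_univ L)] at hmin
  have hqL_not_dvd : ¬ q L ∣ F :=
    (hirr L).prime.not_dvd_prod_pow d _ fun i hi hdvd =>
      hdist L i (Finset.ne_of_mem_erase hi).symm
        (eq_of_irreducible_of_dvd_zmod_two (hirr L) (hirr i) hdvd)
  constructor
  · rintro rfl
    have hdvd := (dvd_mul_left _ _).trans (hmin.dvd hr.symm)
    exact hqL_not_dvd
      ((pow_dvd_mul_pow_pred_iff (hirr L).ne_zero (Nat.one_le_iff_ne_zero.mp (hδ L))).mp hdvd)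
  · have hqL_mul : q L * (F * q L ^ (δ L - 1)) = F * q L ^ δ L := by
      rw [mul_left_comm, ← pow_succ', Nat.sub_add_cancel (hδ L)]
    rw [hr, ← polyApp_mul, hqL_mul]
    refine (zeroPolyIdeal s).mem_of_dvd (mul_dvd_mul ?_ dvd_rfl) hmin.2.1
    exact Finset.prod_dvd_prod_of_dvd _ _ fun i hi =>
      pow_dvd_pow _ (hd i (Finset.ne_of_mem_erase hi))

theorem raise_exponents_of_min_zero_poly
    (s : ℕ → ZMod 2) (hs : s ≠ 0)
    (N : ℕ) (hN : 0 < N) (hper : ∀ i, s (i + N) = s i)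
    (t : ℕ) (q : Fin (t + 1) → Polynomial (ZMod 2)) (δ : Fin (t + 1) → ℕ)
    (hirr : ∀ i, Irreducible (q i))
    (hdist : ∀ i j, i ≠ j → q i ≠ q j)
    (hδ : ∀ i, 1 ≤ δ i)
    (hmin : IsMinZeroPoly (∏ i, q i ^ δ i) s)
    (d : Fin (t + 1) → ℕ) (hd : ∀ i, i ≠ Fin.last t → δ i ≤ d i)
    (r : ℕ → ZMod 2)
    (hr : r = polyApp ((∏ i ∈ Finset.univ.erase (Fin.last t), q i ^ d i) *
                        q (Fin.last t) ^ (δ (Fin.last t) - 1)) s) :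
    r ≠ 0 ∧ polyApp (q (Fin.last t)) r = 0 :=
  raise_exponents_of_min_zero_poly_general s t q δ hirr hdist hδ hmin d hd r hr
end
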